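/- Let Q, P, H ∈ ℝ^{d×d} be symmetric matrices with H ≠ O and let r > 0. If ⟨P, Q − r·H/‖H‖_F⟩ ≥ 0, then the minimum of ⟨X, H⟩ over the set {X symmetric : ‖X − Q‖_F ≤ r and ⟨P, X⟩ ≥ 0} equals ⟨H, Q⟩ − r‖H‖_F, attained at X = Q − r·H/‖H‖_F. (This is the second case of the analytical solution of the linearly-constrained sphere rule problem (P4).) -/
import Mathlib


open scoped BigOperators
open scoped Matrix

/-- Frobenius inner product ⟨A,B⟩ = tr(Aᵀ B). -/
noncomputable def frob {d : ℕ} (A B : Matrix (Fin d) (Fin d) ℝ) : ℝ :=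
  Matrix.trace (Aᵀ * B)

/-- Frobenius norm ‖A‖_F = √⟨A,A⟩. -/
noncomputable def frobNorm {d : ℕ} (A : Matrix (Fin d) (Fin d) ℝ) : ℝ :=
  Real.sqrt (frob A A)

lemma frob_eq_sum {d : ℕ} (A B : Matrix (Fin d) (Fin d) ℝ) :
    frob A B = ∑ p : Fin d × Fin d, A p.2 p.1 * B p.2 p.1 := by
  rw [frob, Matrix.trace]
  simp only [Matrix.diag, Matrix.mul_apply, Matrix.transpose_apply]
  rw [← Finset.sum_product']
  rfl

lemma frob_comm {d : ℕ} (A B : Matrix (Fin d) (Fin d) ℝ) : frob A B = frob B A := by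
  simp only [frob_eq_sum, mul_comm]

lemma frob_self_nonneg {d : ℕ} (A : Matrix (Fin d) (Fin d) ℝ) : 0 ≤ frob A A := by
  rw [frob_eq_sum]
  exact Finset.sum_nonneg fun p _ => mul_self_nonneg _

lemma frob_sub_left {d : ℕ} (A B C : Matrix (Fin d) (Fin d) ℝ) :
    frob (A - B) C = frob A C - frob B C := by
  simp only [frob_eq_sum, Matrix.sub_apply, sub_mul, Finset.sum_sub_distrib]

lemma frob_smul_left {d : ℕ} (c : ℝ) (A B : Matrix (Fin d) (Fin d) ℝ) :
    frob (c • A) B = c * frob A B := by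
  simp only [frob_eq_sum, Matrix.smul_apply, smul_eq_mul, Finset.mul_sum, mul_assoc]

lemma frob_cauchy {d : ℕ} (A B : Matrix (Fin d) (Fin d) ℝ) :
    -(frobNorm A * frobNorm B) ≤ frob A B := by
  have h := Finset.sum_mul_sq_le_sq_mul_sq Finset.univ
    (fun p : Fin d × Fin d => A p.2 p.1) (fun p => B p.2 p.1)
  have hA := frob_self_nonneg A
  have hB := frob_self_nonneg B
  have hsq : (frob A B) ^ 2 ≤ (frobNorm A * frobNorm B) ^ 2 := by
    rw [mul_pow, frobNorm, frobNorm, Real.sq_sqrt hA, Real.sq_sqrt hB]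
    rw [frob_eq_sum A B, frob_eq_sum A A, frob_eq_sum B B]
    simpa [sq] using h
  exact (abs_le_of_sq_le_sq' hsq (mul_nonneg (Real.sqrt_nonneg _) (Real.sqrt_nonneg _))).1

lemma frobNorm_pos {d : ℕ} {H : Matrix (Fin d) (Fin d) ℝ} (hH0 : H ≠ 0) :
    0 < frobNorm H := by
  have h0 : frob H H ≠ 0 := by
    intro h
    apply hH0
    ext i j
    have := (Finset.sum_eq_zero_iff_of_nonneg
      (fun p _ => mul_self_nonneg (H p.2 p.1))).mp (by rw [← frob_eq_sum]; exact h)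
      (j, i) (Finset.mem_univ _)
    simpa [mul_self_eq_zero] using this
  exact Real.sqrt_pos.mpr (lt_of_le_of_ne (frob_self_nonneg H) (Ne.symm h0))

theorem sphere_linear_rule_case2 {d : ℕ} (Q P H : Matrix (Fin d) (Fin d) ℝ)
    (hQ : Q.IsSymm) (hP : P.IsSymm) (hH : H.IsSymm) (hH0 : H ≠ 0)
    (r : ℝ) (hr : 0 < r)
    (hcase : 0 ≤ frob P (Q - (r / frobNorm H) • H)) :
    (∀ X : Matrix (Fin d) (Fin d) ℝ, X.IsSymm → frobNorm (X - Q) ≤ r → 0 ≤ frob P X →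
      frob H Q - r * frobNorm H ≤ frob X H) ∧
    ((Q - (r / frobNorm H) • H).IsSymm ∧
      frobNorm ((Q - (r / frobNorm H) • H) - Q) ≤ r ∧
      0 ≤ frob P (Q - (r / frobNorm H) • H) ∧
      frob (Q - (r / frobNorm H) • H) H = frob H Q - r * frobNorm H) := by
  have hHpos := frobNorm_pos hH0
  have hHH : frob H H = frobNorm H * frobNorm H := by
    rw [frobNorm, Real.mul_self_sqrt (frob_self_nonneg H)]
  constructor
  · intro X hXs hXr hXP
    have hc : -(frobNorm H * frobNorm (X - Q)) ≤ frob H (X - Q) := frob_cauchy H (X - Q)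
    have h1 : frob H (X - Q) = frob X H - frob H Q := by
      rw [frob_comm, frob_sub_left, frob_comm Q H]
    have h2 : frobNorm H * frobNorm (X - Q) ≤ frobNorm H * r :=
      mul_le_mul_of_nonneg_left hXr hHpos.le
    nlinarith
  · refine ⟨?_, ?_, hcase, ?_⟩
    · show _ = _
      rw [Matrix.transpose_sub, Matrix.transpose_smul]
      rw [Matrix.IsSymm] at hQ hH
      rw [hQ, hH]
    · have : (Q - (r / frobNorm H) • H) - Q = (-(r / frobNorm H)) • H := by
        ext i j; simp [Matrix.sub_apply]
      rw [this, frobNorm]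
      have : frob ((-(r / frobNorm H)) • H) ((-(r / frobNorm H)) • H)
          = (r / frobNorm H)^2 * frob H H := by
        rw [frob_smul_left, frob_comm, frob_smul_left]; ring
      rw [this, hHH]
      have heq : (r / frobNorm H) ^ 2 * (frobNorm H * frobNorm H) = r ^ 2 := by
        field_simp
      rw [heq, Real.sqrt_sq hr.le]
    · rw [frob_sub_left, frob_smul_left, frob_comm Q H, hHH]
      field_simp
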